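/- For every n ≥ 1, every symmetric matrix Y ∈ ℝ^{n×n}, and all λ', σ' > 0, the partition function admits the spherical-integral representation Z(Y) = ∫ P(x) exp(−(λ'/(4n))‖x‖⁴) · [∫_{O(n)} exp(½√(λ'/n) Tr(Y U x xᵀ Uᵀ)) dU] dx, where dU is the Haar probability measure on the orthogonal group O(n) and P = N(0,σ'²)^{⊗n}. -/

import Mathlib

/-!
The Gaussian prior `N(0, σ'²)^{⊗n}` and the weight `exp(-(λ'/(4n))‖x‖⁴)` are invariant under every
orthogonal `U`, and `U x xᵀ Uᵀ = (Ux)(Ux)ᵀ`, so the right-hand side is the average over `U` of the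
partition integrand evaluated at `Ux`. The integrand is bounded, since the quartic term dominates
the quadratic one, so Fubini lets us integrate over `x` first; each inner integral is then `Z(Y)`,
and `μ` has total mass one.
-/

open MeasureTheory ProbabilityTheory Filter Matrix

noncomputable section

instance {n : ℕ} : MeasurableSpace (Matrix (Fin n) (Fin n) ℝ) :=
  inferInstanceAs (MeasurableSpace (Fin n → Fin n → ℝ))

/-- Squared Frobenius norm of a matrix. -/
def frobSq {n : ℕ} (M : Matrix (Fin n) (Fin n) ℝ) : ℝ := ∑ i, ∑ j, (M i j) ^ 2

/-- i.i.d. centered Gaussian prior with variance `v` on `ℝⁿ`. -/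
def gaussPrior (n : ℕ) (v : ℝ) : Measure (Fin n → ℝ) :=
  Measure.pi fun _ => gaussianReal 0 (Real.toNNReal v)

/-- Partition function `Z(Y)`. -/
def partitionFn (n : ℕ) (sig' lam' : ℝ) (Y : Matrix (Fin n) (Fin n) ℝ) : ℝ :=
  ∫ x, Real.exp (-(lam' / (4 * n)) * (∑ i, (x i) ^ 2) ^ 2 +
      (1 / 2) * Real.sqrt (lam' / n) * Matrix.trace (Y * Matrix.vecMulVec x x))
    ∂gaussPrior n (sig' ^ 2)

/-- `μ` is the Haar probability measure on the orthogonal group `O(n)`: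
it is a left-invariant probability measure. -/
def IsHaarProb (n : ℕ) (μ : Measure (Matrix.orthogonalGroup (Fin n) ℝ)) : Prop :=
  IsProbabilityMeasure μ ∧
    ∀ V : Matrix.orthogonalGroup (Fin n) ℝ, μ.map (fun U => V * U) = μ

section Averaging

variable {X G : Type*} [MeasurableSpace X] [MeasurableSpace G] {P : Measure X} {μ : Measure G}
  [SFinite P] [IsProbabilityMeasure μ] {T : G → X → X}

theorem measurePreserving_uncurry_of_forall (hT : Measurable fun p : X × G => T p.2 p.1)
    (hTP : ∀ g, MeasurePreserving (T g) P P) :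
    MeasurePreserving (fun p : X × G => T p.2 p.1) (P.prod μ) P := by
  refine ⟨hT, Measure.ext fun s hs => ?_⟩
  rw [Measure.map_apply hT hs, Measure.prod_apply_symm (hT hs)]
  simp_rw [Set.preimage_preimage, fun g => (hTP g).measure_preimage hs.nullMeasurableSet]
  simp

theorem integral_integral_comp_of_measurePreserving
    (hT : Measurable fun p : X × G => T p.2 p.1) (hTP : ∀ g, MeasurePreserving (T g) P P)
    {F : X → ℝ} (hF : Integrable F P) :
    ∫ x, ∫ g, F (T g x) ∂μ ∂P = ∫ x, F x ∂P := by
  have hFT : Integrable (fun p : X × G => F (T p.2 p.1)) (P.prod μ) :=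
    (measurePreserving_uncurry_of_forall hT hTP).integrable_comp_of_integrable hF
  have hinner (g : G) : ∫ x, F (T g x) ∂P = ∫ x, F x ∂P := by
    rw [← integral_map (hTP g).measurable.aemeasurable (by rw [(hTP g).map_eq]; exact hF.1),
      (hTP g).map_eq]
  rw [integral_integral_swap hFT]
  simp [hinner]

end Averaging

section Orthogonal

variable {ι : Type*} [Fintype ι]

theorem gaussianReal_eq_map_const_mul (v : NNReal) :
    gaussianReal 0 v = (gaussianReal 0 1).map ((v : ℝ).sqrt * ·) := by
  rw [gaussianReal_map_const_mul]
  congr 1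
  · simp
  · ext; simp

theorem pi_gaussianReal_eq_map_stdGaussian (v : NNReal) :
    Measure.pi (fun _ : ι => gaussianReal 0 v) =
      (stdGaussian (EuclideanSpace ℝ ι)).map fun y => (v : ℝ).sqrt • WithLp.ofLp y := by
  rw [← map_pi_eq_stdGaussian, Measure.map_map (by fun_prop) (by fun_prop)]
  simp_rw [gaussianReal_eq_map_const_mul v]
  rw [← Measure.pi_map_pi (fun _ => (measurable_const_mul _).aemeasurable)]
  rfl

theorem mul_vecMulVec_mul_transpose (M : Matrix ι ι ℝ) (x : ι → ℝ) :
    M * vecMulVec x x * Mᵀ = vecMulVec (M *ᵥ x) (M *ᵥ x) := by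
  rw [mul_vecMulVec, vecMulVec_mul, vecMul_transpose]

variable [DecidableEq ι]

def Matrix.orthogonalGroup.toLinearIsometryEquiv (U : orthogonalGroup ι ℝ) :
    EuclideanSpace ℝ ι ≃ₗᵢ[ℝ] EuclideanSpace ℝ ι :=
  Unitary.linearIsometryEquiv
    ⟨toEuclideanCLM (n := ι) (𝕜 := ℝ) (U : Matrix ι ι ℝ), Unitary.map_mem _ U.2⟩

theorem Matrix.orthogonalGroup.toLinearIsometryEquiv_apply (U : orthogonalGroup ι ℝ)
    (x : EuclideanSpace ℝ ι) :
    orthogonalGroup.toLinearIsometryEquiv U x =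
      WithLp.toLp 2 ((U : Matrix ι ι ℝ) *ᵥ WithLp.ofLp x) :=
  rfl

theorem measurePreserving_mulVec_pi_gaussianReal (v : NNReal) (U : orthogonalGroup ι ℝ) :
    MeasurePreserving ((U : Matrix ι ι ℝ) *ᵥ ·) (Measure.pi fun _ : ι => gaussianReal 0 v)
      (Measure.pi fun _ : ι => gaussianReal 0 v) := by
  refine ⟨by fun_prop, ?_⟩
  have hcomm : ((U : Matrix ι ι ℝ) *ᵥ ·) ∘ (fun y : EuclideanSpace ℝ ι => (v : ℝ).sqrt • y.ofLp) =
      (fun y => (v : ℝ).sqrt • y.ofLp) ∘ orthogonalGroup.toLinearIsometryEquiv U := by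
    ext y : 1
    simp [orthogonalGroup.toLinearIsometryEquiv_apply, Matrix.mulVec_smul]
  rw [pi_gaussianReal_eq_map_stdGaussian, Measure.map_map (by fun_prop) (by fun_prop), hcomm,
    ← Measure.map_map (by fun_prop) (by fun_prop), stdGaussian_map]

theorem sum_sq_orthogonalGroup_mulVec (U : orthogonalGroup ι ℝ) (x : ι → ℝ) :
    ∑ i, ((U : Matrix ι ι ℝ) *ᵥ x) i ^ 2 = ∑ i, x i ^ 2 := by
  have h := congrArg (· ^ 2) ((orthogonalGroup.toLinearIsometryEquiv U).norm_map (WithLp.toLp 2 x))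
  simpa [orthogonalGroup.toLinearIsometryEquiv_apply, EuclideanSpace.real_norm_sq_eq] using h

end Orthogonal

section Bound

variable {ι : Type*} [Fintype ι]

theorem abs_mul_le_sum_sq (x : ι → ℝ) (i j : ι) : |x i * x j| ≤ ∑ k, x k ^ 2 := by
  have hsq (k : ι) : x k ^ 2 ≤ ∑ k, x k ^ 2 :=
    Finset.single_le_sum (f := fun k => x k ^ 2) (fun _ _ => sq_nonneg _) (Finset.mem_univ k)
  rw [abs_mul]
  nlinarith [hsq i, hsq j, sq_nonneg (|x i| - |x j|), sq_abs (x i), sq_abs (x j)]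

theorem abs_trace_mul_vecMulVec_le (Y : Matrix ι ι ℝ) (x : ι → ℝ) :
    |trace (Y * vecMulVec x x)| ≤ (∑ i, ∑ j, |Y i j|) * ∑ k, x k ^ 2 := by
  have htrace : trace (Y * vecMulVec x x) = ∑ i, ∑ j, Y i j * (x j * x i) := by
    simp [trace, mul_apply, vecMulVec_apply]
  rw [htrace, Finset.sum_mul]
  refine (Finset.abs_sum_le_sum_abs _ _).trans (Finset.sum_le_sum fun i _ => ?_)
  rw [Finset.sum_mul]
  refine (Finset.abs_sum_le_sum_abs _ _).trans (Finset.sum_le_sum fun j _ => ?_)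
  rw [abs_mul]
  exact mul_le_mul_of_nonneg_left (abs_mul_le_sum_sq x j i) (abs_nonneg _)

theorem neg_mul_sq_add_mul_le {a : ℝ} (ha : 0 < a) (b t : ℝ) :
    -a * t ^ 2 + b * t ≤ b ^ 2 / (4 * a) := by
  rw [le_div_iff₀ (by positivity)]
  nlinarith [sq_nonneg (2 * a * t - b)]

theorem integrable_exp_neg_sq_sum_sq_add_trace {P : Measure (ι → ℝ)} [IsFiniteMeasure P]
    {a : ℝ} (ha : 0 < a) (c : ℝ) (Y : Matrix ι ι ℝ) :
    Integrable (fun x => Real.exp (-a * (∑ i, x i ^ 2) ^ 2 + c * trace (Y * vecMulVec x x))) P := by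
  set C := |c| * ∑ i, ∑ j, |Y i j|
  refine Integrable.of_bound (Continuous.aestronglyMeasurable (by fun_prop))
    (Real.exp (C ^ 2 / (4 * a))) (ae_of_all _ fun x => ?_)
  have htrace : c * trace (Y * vecMulVec x x) ≤ C * ∑ i, x i ^ 2 := by
    calc c * trace (Y * vecMulVec x x) ≤ |c| * |trace (Y * vecMulVec x x)| := by
          rw [← abs_mul]; exact le_abs_self _
      _ ≤ C * ∑ i, x i ^ 2 := by
          rw [mul_assoc]
          exact mul_le_mul_of_nonneg_left (abs_trace_mul_vecMulVec_le Y x) (abs_nonneg c)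
  rw [Real.norm_eq_abs, Real.abs_exp, Real.exp_le_exp]
  linarith [neg_mul_sq_add_mul_le ha C (∑ i, x i ^ 2)]

end Bound

theorem measurable_orthogonalGroup_mulVec (n : ℕ) :
    Measurable fun p : (Fin n → ℝ) × orthogonalGroup (Fin n) ℝ =>
      (p.2 : Matrix (Fin n) (Fin n) ℝ) *ᵥ p.1 :=
  measurable_pi_lambda _ fun i => by
    simp only [mulVec, dotProduct]
    exact Finset.measurable_sum _ fun j _ =>
      ((measurable_pi_apply j).comp ((measurable_pi_apply i).comp
        (measurable_subtype_coe.comp measurable_snd))).mul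
        ((measurable_pi_apply j).comp measurable_fst)

theorem partition_spherical_representation_general (n : ℕ) (hn : 1 ≤ n)
    (sig' lam' : ℝ) (hlam' : 0 < lam')
    (Y : Matrix (Fin n) (Fin n) ℝ)
    (μ : Measure (Matrix.orthogonalGroup (Fin n) ℝ)) (hμ : IsHaarProb n μ) :
    partitionFn n sig' lam' Y =
      ∫ x, Real.exp (-(lam' / (4 * n)) * (∑ i, (x i) ^ 2) ^ 2) *
          (∫ U, Real.exp ((1 / 2) * Real.sqrt (lam' / n) *
              Matrix.trace (Y * ((U : Matrix (Fin n) (Fin n) ℝ) *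
                Matrix.vecMulVec x x * (U : Matrix (Fin n) (Fin n) ℝ)ᵀ)) ) ∂μ)
        ∂gaussPrior n (sig' ^ 2) := by
  have : IsProbabilityMeasure μ := hμ.1
  have ha : 0 < lam' / (4 * n) := by
    have : (0 : ℝ) < n := by exact_mod_cast hn
    positivity
  set g : (Fin n → ℝ) → ℝ := fun x => Real.exp (-(lam' / (4 * n)) * (∑ i, x i ^ 2) ^ 2 +
    (1 / 2) * Real.sqrt (lam' / n) * trace (Y * vecMulVec x x))
  have hrotate (x : Fin n → ℝ) :
      Real.exp (-(lam' / (4 * n)) * (∑ i, x i ^ 2) ^ 2) *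
        ∫ U, Real.exp ((1 / 2) * Real.sqrt (lam' / n) *
          trace (Y * ((U : Matrix (Fin n) (Fin n) ℝ) * vecMulVec x x * (U : Matrix _ _ ℝ)ᵀ))) ∂μ =
      ∫ U, g ((U : Matrix (Fin n) (Fin n) ℝ) *ᵥ x) ∂μ := by
    rw [← integral_const_mul]
    simp_rw [g, sum_sq_orthogonalGroup_mulVec, mul_vecMulVec_mul_transpose, Real.exp_add]
  simp_rw [hrotate]
  unfold gaussPrior
  exact (integral_integral_comp_of_measurePreserving (measurable_orthogonalGroup_mulVec n)
    (measurePreserving_mulVec_pi_gaussianReal _) (integrable_exp_neg_sq_sum_sq_add_trace ha _ Y)).symm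

/-- Spherical-integral representation of the partition function:
`Z(Y) = ∫ P(x) e^{−(λ'/(4n))‖x‖⁴} ∫_{O(n)} e^{½√(λ'/n) Tr(Y U x xᵀ Uᵀ)} dU dx`. -/
theorem partition_spherical_representation (n : ℕ) (hn : 1 ≤ n)
    (sig' lam' : ℝ) (hsig' : 0 < sig') (hlam' : 0 < lam')
    (Y : Matrix (Fin n) (Fin n) ℝ) (hY : Y.IsSymm)
    (μ : Measure (Matrix.orthogonalGroup (Fin n) ℝ)) (hμ : IsHaarProb n μ) :
    partitionFn n sig' lam' Y =
      ∫ x, Real.exp (-(lam' / (4 * n)) * (∑ i, (x i) ^ 2) ^ 2) *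
          (∫ U, Real.exp ((1 / 2) * Real.sqrt (lam' / n) *
              Matrix.trace (Y * ((U : Matrix (Fin n) (Fin n) ℝ) *
                Matrix.vecMulVec x x * (U : Matrix (Fin n) (Fin n) ℝ)ᵀ)) ) ∂μ)
        ∂gaussPrior n (sig' ^ 2) :=
  partition_spherical_representation_general n hn sig' lam' hlam' Y μ hμ
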